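/- arXiv:1702.04295 — 2 statements merged into one kernel-verified Lean document; each statement's English description precedes it below -/
import Mathlib

section
/- (Lemma 1) Let γ₁ ∈ [0,1], γ₂ ∈ [0,1], τ ∈ ℝ. Let ĥ₁, ĥ₂, t₂ : ℝ → ℂ be eventually nonzero and satisfy |ĥ₁(P)|² ≐ P^{γ₁−1} and |ĥ₂(P)|² ≐ P^{γ₂−1}, and define t₁(P) := −ĥ₁(P)·(|ĥ₁(P)|² + P^{−1})^{−1}·conj(ĥ₂(P))·t₂(P). If the total power satisfies |t₁(P)|² + |t₂(P)|² ≐ P^{τ}, then |t₁(P)|² ≐ P^{τ−(γ₁−γ₂)⁺} and |t₂(P)|² ≐ P^{τ−(γ₂−γ₁)⁺}, where (x)⁺ := max(x,0). -/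
/-!
Writing `a = |ĥ₁|²`, `b = |ĥ₂|²`, `s = |t₂|²`, the active power is `|t₁|² = g s` with gain
`g = a b / (a + P⁻¹)²`. Since `γ₁ ≥ 0`, the regularisation `P⁻¹` is negligible against `a ≐ P^{γ₁-1}`,
so `g ≐ P^{γ₂-γ₁}`. The total power is `(g + 1) s` and `g + 1 ≐ P^{(γ₂-γ₁)⁺}`, which fixes the
exponent of `s`, and then that of `g s`.
-/

open Filter

/-- `ExpEq f β`: exponential equality `f(P) ≐ P^β`. -/
def ExpEq (f : ℝ → ℝ) (β : ℝ) : Prop :=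
  Tendsto (fun P : ℝ => Real.log (f P) / Real.log P) atTop (nhds β)

/-- The AP-ZF active coefficient:
`t₁(P) = -e₁(P) (|e₁(P)|² + P⁻¹)⁻¹ conj(e₂(P)) t₂(P)`. -/
noncomputable def apzfActive (e₁ e₂ t₂ : ℝ → ℂ) : ℝ → ℂ := fun P =>
  -e₁ P * (((‖e₁ P‖ ^ 2 + P⁻¹ : ℝ) : ℂ))⁻¹ * (starRingEnd ℂ) (e₂ P) * t₂ P

theorem max_log_le_log_add {x y : ℝ} (hx : 0 < x) (hy : 0 < y) :
    max (Real.log x) (Real.log y) ≤ Real.log (x + y) :=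
  max_le (Real.log_le_log hx (by linarith)) (Real.log_le_log hy (by linarith))

theorem log_add_le_log_two_add_max_log {x y : ℝ} (hx : 0 < x) (hy : 0 < y) :
    Real.log (x + y) ≤ Real.log 2 + max (Real.log x) (Real.log y) := by
  rcases le_total x y with hxy | hxy
  · calc Real.log (x + y) ≤ Real.log (2 * y) := Real.log_le_log (by linarith) (by linarith)
      _ = Real.log 2 + Real.log y := Real.log_mul two_ne_zero hy.ne'
      _ ≤ Real.log 2 + max (Real.log x) (Real.log y) := by gcongr; exact le_max_right _ _
  · calc Real.log (x + y) ≤ Real.log (2 * x) := Real.log_le_log (by linarith) (by linarith)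
      _ = Real.log 2 + Real.log x := Real.log_mul two_ne_zero hx.ne'
      _ ≤ Real.log 2 + max (Real.log x) (Real.log y) := by gcongr; exact le_max_left _ _

namespace ExpEq

variable {f g : ℝ → ℝ} {α β : ℝ}

theorem congr' (hf : ExpEq f α) (hfg : f =ᶠ[atTop] g) : ExpEq g α :=
  Tendsto.congr' (hfg.mono fun P hP => by simp only [hP]) hf

theorem const (c : ℝ) : ExpEq (fun _ => c) 0 :=
  tendsto_const_nhds.div_atTop Real.tendsto_log_atTop

theorem id : ExpEq (fun P => P) 1 :=
  tendsto_const_nhds.congr' <| (eventually_gt_atTop 1).mono fun _ hP =>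
    (div_self (Real.log_pos hP).ne').symm

theorem inv (hf : ExpEq f α) : ExpEq (fun P => (f P)⁻¹) (-α) :=
  (Tendsto.neg hf).congr' <| Eventually.of_forall fun P => by simp only [Real.log_inv, neg_div]

theorem pow (hf : ExpEq f α) (n : ℕ) : ExpEq (fun P => f P ^ n) (n * α) :=
  (Tendsto.const_mul (n : ℝ) hf).congr' <| Eventually.of_forall fun P => by
    simp only [Real.log_pow, mul_div_assoc]

theorem mul (hf : ExpEq f α) (hg : ExpEq g β)
    (hf₀ : ∀ᶠ P in atTop, f P ≠ 0) (hg₀ : ∀ᶠ P in atTop, g P ≠ 0) :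
    ExpEq (fun P => f P * g P) (α + β) :=
  (Tendsto.add hf hg).congr' <| (hf₀.and hg₀).mono fun P hP => by
    simp only [Real.log_mul hP.1 hP.2, add_div]

theorem div (hf : ExpEq f α) (hg : ExpEq g β)
    (hf₀ : ∀ᶠ P in atTop, f P ≠ 0) (hg₀ : ∀ᶠ P in atTop, g P ≠ 0) :
    ExpEq (fun P => f P / g P) (α - β) :=
  (Tendsto.sub hf hg).congr' <| (hf₀.and hg₀).mono fun P hP => by
    simp only [Real.log_div hP.1 hP.2, sub_div]

theorem add (hf : ExpEq f α) (hg : ExpEq g β)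
    (hf₀ : ∀ᶠ P in atTop, 0 < f P) (hg₀ : ∀ᶠ P in atTop, 0 < g P) :
    ExpEq (fun P => f P + g P) (max α β) := by
  have hpos : ∀ᶠ P in atTop, 0 < f P ∧ 0 < g P ∧ 0 < Real.log P :=
    hf₀.and (hg₀.and ((eventually_gt_atTop 1).mono fun _ => Real.log_pos))
  have hmax := (Tendsto.max hf hg).congr' <| hpos.mono fun P hP =>
    max_div_div_right hP.2.2.le (Real.log (f P)) (Real.log (g P))
  have hupper := Tendsto.add (ExpEq.const 2) hmax
  rw [zero_add] at hupper
  refine tendsto_of_tendsto_of_tendsto_of_le_of_le' hmax hupper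
    (hpos.mono fun P ⟨hfP, hgP, hlog⟩ => ?_) (hpos.mono fun P ⟨hfP, hgP, hlog⟩ => ?_)
  · exact div_le_div_of_nonneg_right (max_log_le_log_add hfP hgP) hlog.le
  · rw [← add_div]
    exact div_le_div_of_nonneg_right (log_add_le_log_two_add_max_log hfP hgP) hlog.le

theorem add_inv_self (hf : ExpEq f α) (hα : -1 ≤ α) (hf₀ : ∀ᶠ P in atTop, 0 < f P) :
    ExpEq (fun P => f P + P⁻¹) α := by
  simpa only [max_eq_left hα] using
    hf.add ExpEq.id.inv hf₀ ((eventually_gt_atTop 0).mono fun _ => inv_pos.mpr)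

theorem split_of_mul_add (hg : ExpEq g β) (htot : ExpEq (fun P => g P * f P + f P) α)
    (hg₀ : ∀ᶠ P in atTop, 0 < g P) (hf₀ : ∀ᶠ P in atTop, 0 < f P) :
    ExpEq f (α - max β 0) ∧ ExpEq (fun P => g P * f P) (α - max (-β) 0) := by
  have hg1 : ExpEq (fun P => g P + 1) (max β 0) :=
    hg.add (ExpEq.const 1) hg₀ (Eventually.of_forall fun _ => one_pos)
  have hg1₀ : ∀ᶠ P in atTop, 0 < g P + 1 := hg₀.mono fun _ h => by linarith
  have hf : ExpEq f (α - max β 0) :=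
    (htot.div hg1 (hg1₀.and hf₀ |>.mono fun _ h => by nlinarith) (hg1₀.mono fun _ => ne_of_gt))
      |>.congr' <| hg1₀.mono fun P h => by field_simp
  refine ⟨hf, ?_⟩
  have hexp : β + (α - max β 0) = α - max (-β) 0 := by
    rcases le_total β 0 with h | h
    · rw [max_eq_right h, max_eq_left (by linarith)]; ring
    · rw [max_eq_left h, max_eq_right (by linarith)]; ring
  simpa only [hexp] using
    hg.mul hf (hg₀.mono fun _ => ne_of_gt) (hf₀.mono fun _ => ne_of_gt)

end ExpEq

noncomputable def apzfGain (e₁ e₂ : ℝ → ℂ) (P : ℝ) : ℝ :=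
  ‖e₁ P‖ ^ 2 * ‖e₂ P‖ ^ 2 / (‖e₁ P‖ ^ 2 + P⁻¹) ^ 2

theorem norm_sq_apzfActive (e₁ e₂ t₂ : ℝ → ℂ) (P : ℝ) :
    ‖apzfActive e₁ e₂ t₂ P‖ ^ 2 = apzfGain e₁ e₂ P * ‖t₂ P‖ ^ 2 := by
  simp only [apzfActive, apzfGain, norm_mul, norm_neg, norm_inv, Complex.norm_conj,
    Complex.norm_real, Real.norm_eq_abs, mul_pow, inv_pow, sq_abs]
  ring

theorem apzfGain_pos {e₁ e₂ : ℝ → ℂ} {P : ℝ} (hP : 0 < P) (h₁ : e₁ P ≠ 0) (h₂ : e₂ P ≠ 0) :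
    0 < apzfGain e₁ e₂ P := by
  have : 0 < ‖e₁ P‖ := norm_pos_iff.mpr h₁
  have : 0 < ‖e₂ P‖ := norm_pos_iff.mpr h₂
  unfold apzfGain
  positivity

theorem expEq_apzfGain {γ₁ γ₂ : ℝ} (hγ₁ : 0 ≤ γ₁) {e₁ e₂ : ℝ → ℂ}
    (hne₁ : ∀ᶠ P in atTop, e₁ P ≠ 0) (hne₂ : ∀ᶠ P in atTop, e₂ P ≠ 0)
    (h1 : ExpEq (fun P => ‖e₁ P‖ ^ 2) (γ₁ - 1)) (h2 : ExpEq (fun P => ‖e₂ P‖ ^ 2) (γ₂ - 1)) :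
    ExpEq (apzfGain e₁ e₂) (γ₂ - γ₁) := by
  have ha₀ : ∀ᶠ P in atTop, 0 < ‖e₁ P‖ ^ 2 := hne₁.mono fun _ h => by positivity
  have hb₀ : ∀ᶠ P in atTop, 0 < ‖e₂ P‖ ^ 2 := hne₂.mono fun _ h => by positivity
  have hd₀ : ∀ᶠ P in atTop, 0 < (‖e₁ P‖ ^ 2 + P⁻¹) ^ 2 :=
    (ha₀.and (eventually_gt_atTop 0)).mono fun P h => by have := inv_pos.mpr h.2; positivity
  have hd := (h1.add_inv_self (by linarith) ha₀).pow 2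
  have := (h1.mul h2 (ha₀.mono fun _ => ne_of_gt) (hb₀.mono fun _ => ne_of_gt)).div hd
    ((ha₀.and hb₀).mono fun _ h => (mul_pos h.1 h.2).ne') (hd₀.mono fun _ => ne_of_gt)
  rwa [show γ₁ - 1 + (γ₂ - 1) - ((2 : ℕ) : ℝ) * (γ₁ - 1) = γ₂ - γ₁ by push_cast; ring] at this

theorem apzf_power_split_general (γ₁ γ₂ τ : ℝ)
    (hγ₁ : γ₁ ∈ Set.Icc (0 : ℝ) 1)
    (e₁ e₂ t₂ : ℝ → ℂ)
    (hne₁ : ∀ᶠ P in atTop, e₁ P ≠ 0) (hne₂ : ∀ᶠ P in atTop, e₂ P ≠ 0)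
    (hnt₂ : ∀ᶠ P in atTop, t₂ P ≠ 0)
    (h1 : ExpEq (fun P => ‖e₁ P‖ ^ 2) (γ₁ - 1))
    (h2 : ExpEq (fun P => ‖e₂ P‖ ^ 2) (γ₂ - 1))
    (htot : ExpEq
      (fun P => ‖apzfActive e₁ e₂ t₂ P‖ ^ 2 + ‖t₂ P‖ ^ 2) τ) :
    ExpEq (fun P => ‖apzfActive e₁ e₂ t₂ P‖ ^ 2) (τ - max (γ₁ - γ₂) 0) ∧
    ExpEq (fun P => ‖t₂ P‖ ^ 2) (τ - max (γ₂ - γ₁) 0) := by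
  have hgain := expEq_apzfGain hγ₁.1 hne₁ hne₂ h1 h2
  have hgain₀ : ∀ᶠ P in atTop, 0 < apzfGain e₁ e₂ P :=
    ((eventually_gt_atTop 0).and (hne₁.and hne₂)).mono fun _ h => apzfGain_pos h.1 h.2.1 h.2.2
  have hs₀ : ∀ᶠ P in atTop, 0 < ‖t₂ P‖ ^ 2 := hnt₂.mono fun _ h => by positivity
  simp only [norm_sq_apzfActive] at htot ⊢
  obtain ⟨hs, hactive⟩ := hgain.split_of_mul_add htot hgain₀ hs₀
  rw [neg_sub] at hactive
  exact ⟨hactive, hs⟩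

/-- Lemma 1: power splitting of the AP-ZF precoder under total power `P^τ`:
`|t₁(P)|² ≐ P^{τ-(γ₁-γ₂)⁺}` and `|t₂(P)|² ≐ P^{τ-(γ₂-γ₁)⁺}`. -/
theorem apzf_power_split (γ₁ γ₂ τ : ℝ)
    (hγ₁ : γ₁ ∈ Set.Icc (0 : ℝ) 1) (hγ₂ : γ₂ ∈ Set.Icc (0 : ℝ) 1)
    (e₁ e₂ t₂ : ℝ → ℂ)
    (hne₁ : ∀ᶠ P in atTop, e₁ P ≠ 0) (hne₂ : ∀ᶠ P in atTop, e₂ P ≠ 0)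
    (hnt₂ : ∀ᶠ P in atTop, t₂ P ≠ 0)
    (h1 : ExpEq (fun P => ‖e₁ P‖ ^ 2) (γ₁ - 1))
    (h2 : ExpEq (fun P => ‖e₂ P‖ ^ 2) (γ₂ - 1))
    (htot : ExpEq
      (fun P => ‖apzfActive e₁ e₂ t₂ P‖ ^ 2 + ‖t₂ P‖ ^ 2) τ) :
    ExpEq (fun P => ‖apzfActive e₁ e₂ t₂ P‖ ^ 2) (τ - max (γ₁ - γ₂) 0) ∧
    ExpEq (fun P => ‖t₂ P‖ ^ 2) (τ - max (γ₂ - γ₁) 0) :=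
  apzf_power_split_general γ₁ γ₂ τ hγ₁ e₁ e₂ t₂ hne₁ hne₂ hnt₂ h1 h2 htot
end

section
/- Let γ₁₁, γ₁₂, γ₂₁, γ₂₂, α₁, α₂ ∈ ℝ with γ₁₁ ≥ max(γ₁₂, γ₂₁, γ₂₂), γ₂₁ ≤ γ₂₂, α₁ ≥ 0 and α₂ ≥ 0. Define D₁ := max(γ₁₂, γ₁₁) + max((γ₂₁ − γ₁₁ + α₁)⁺, (γ₂₂ − γ₁₂ + α₁)⁺) and D₂ := max(γ₂₂, γ₂₁) + max((γ₁₁ − γ₂₁ + α₂)⁺, (γ₁₂ − γ₂₂ + α₂)⁺), where (x)⁺ := max(x,0). Then min(D₁, D₂) = min(γ₁₁ + (γ₂₂ − γ₁₂ + α₁)⁺, γ₂₂ + γ₁₁ − γ₂₁ + α₂). -/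
/-- Simplification of the centralized GDoF formula `min(D₁,D₂)` (Theorem 1) in the
topology case `γ₁₁ ≥ max(γ₁₂,γ₂₁,γ₂₂)` and `γ₂₁ ≤ γ₂₂` (eq. (50)). -/
theorem gdof_simplification_case1 (γ₁₁ γ₁₂ γ₂₁ γ₂₂ α₁ α₂ : ℝ)
    (hstrong : γ₁₁ ≥ max γ₁₂ (max γ₂₁ γ₂₂)) (hcase : γ₂₁ ≤ γ₂₂)
    (hα₁ : 0 ≤ α₁) (hα₂ : 0 ≤ α₂) :
    min (max γ₁₂ γ₁₁ + max (max (γ₂₁ - γ₁₁ + α₁) 0) (max (γ₂₂ - γ₁₂ + α₁) 0))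
        (max γ₂₂ γ₂₁ + max (max (γ₁₁ - γ₂₁ + α₂) 0) (max (γ₁₂ - γ₂₂ + α₂) 0))
      = min (γ₁₁ + max (γ₂₂ - γ₁₂ + α₁) 0) (γ₂₂ + γ₁₁ - γ₂₁ + α₂) := by
  have h1 : γ₁₂ ≤ γ₁₁ := le_trans (le_max_left _ _) hstrong
  have h2 : γ₂₁ ≤ γ₁₁ := le_trans (le_trans (le_max_left _ _) (le_max_right _ _)) hstrong
  have h3 : γ₂₂ ≤ γ₁₁ := le_trans (le_trans (le_max_right _ _) (le_max_right _ _)) hstrong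
  have A : max γ₁₂ γ₁₁ = γ₁₁ := max_eq_right h1
  have B : max γ₂₂ γ₂₁ = γ₂₂ := max_eq_left hcase
  have C : max (max (γ₂₁ - γ₁₁ + α₁) 0) (max (γ₂₂ - γ₁₂ + α₁) 0)
      = max (γ₂₂ - γ₁₂ + α₁) 0 :=
    max_eq_right (max_le_max (by linarith) le_rfl)
  have D : max (max (γ₁₁ - γ₂₁ + α₂) 0) (max (γ₁₂ - γ₂₂ + α₂) 0)
      = γ₁₁ - γ₂₁ + α₂ := by
    rw [max_eq_left (by linarith : (0:ℝ) ≤ γ₁₁ - γ₂₁ + α₂)]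
    exact max_eq_left (max_le (by linarith) (by linarith))
  rw [A, B, C, D]
  ring_nf
end
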